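/- arXiv:2603.27266 — 6 statements merged into one kernel-verified Lean document; each statement's English description precedes it below -/
import Mathlib

section
/- For every integer r ≥ 1 and every real s > 1, the Newton-type recurrence holds: r·ζ_r(s) = ∑_{j=1}^{r} (−1)^{j−1} ζ_{r−j}(s)·ζ(j s). -/
/-- The Riemann zeta function for real `s > 1`, as the series `∑ n^{-s}`. -/
noncomputable def riemannZetaReal (s : ℝ) : ℝ :=
  ∑' n : ℕ+, (((n : ℕ) : ℝ) ^ s)⁻¹

/-- The multiple zeta function at identical arguments:
`ζ_r(s) = ∑_{n₁ > ⋯ > n_r > 0} (n₁ ⋯ n_r)^{-s}`; by convention `ζ₀(s) = 1`. -/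
noncomputable def multZeta (r : ℕ) (s : ℝ) : ℝ :=
  ∑' f : {f : Fin r → ℕ+ // StrictAnti f}, ∏ i, (((f.1 i : ℕ) : ℝ) ^ s)⁻¹

/-!
For a finite set `S` of indices, Newton's identities (`MvPolynomial.mul_esymm_eq_sum`) relate the
elementary symmetric sums `e_k(S) = ∑_{A ⊆ S, #A = k} ∏_{i ∈ A} x i` to the power sums
`∑_{i ∈ S} x i ^ j`. With `x n = n^{-s}`, listing an `r`-set of positive integers decreasingly
identifies `ζ_r(s)` with the sum of `∏_{i ∈ A} x i` over all `r`-sets `A`, while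
`ζ(js) = ∑ x n ^ j`. For `s > 1` these families are absolutely summable, so letting `S` exhaust
`ℕ+` turns the finite identities into the claimed one.
-/

open Finset

theorem Finset.mul_esymm_map_val_eq_sum {ι R : Type*} [CommRing R] (S : Finset ι) (x : ι → R)
    (k : ℕ) :
    k * (S.val.map x).esymm k =
      ∑ j ∈ Icc 1 k, (-1) ^ (j - 1) * (S.val.map x).esymm (k - j) * ∑ i ∈ S, x i ^ j := by
  have hval : univ.val.map (fun i : S => x i) = S.val.map x := by
    rw [Finset.univ_eq_attach, Finset.attach_val]; exact Multiset.attach_map_val' _ _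
  have h := congrArg (MvPolynomial.aeval fun i : S => x i) (MvPolynomial.mul_esymm_eq_sum S R k)
  simp only [map_mul, map_natCast, map_pow, map_neg, map_one, map_sum,
    MvPolynomial.aeval_esymm_eq_multiset_esymm, MvPolynomial.psum, MvPolynomial.aeval_X, hval] at h
  rw [h, Finset.mul_sum]
  -- reindex the antidiagonal pairs `(k - j, j)` by `j`
  refine Finset.sum_nbij' (fun p => p.2) (fun j => (k - j, j)) ?_ ?_ ?_ ?_ ?_
  · rintro ⟨a, j⟩ hp
    simp only [mem_filter, HasAntidiagonal.mem_antidiagonal] at hp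
    simp only [mem_Icc]; omega
  · intro j hj
    simp only [mem_Icc] at hj
    simp only [mem_filter, HasAntidiagonal.mem_antidiagonal]; omega
  · rintro ⟨a, j⟩ hp
    simp only [mem_filter, HasAntidiagonal.mem_antidiagonal] at hp
    simp only [Prod.mk.injEq, and_true]; omega
  · exact fun _ _ => rfl
  · rintro ⟨a, j⟩ hp
    simp only [mem_filter, HasAntidiagonal.mem_antidiagonal] at hp
    obtain rfl : a = k - j := by omega
    rw [← mul_assoc, ← mul_assoc, ← pow_add,
      show k + 1 + (k - j) = 2 * (k - j + 1) + (j - 1) by omega, pow_add, pow_mul,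
      Finset.sum_coe_sort S fun i => x i ^ j]
    simp

open Filter Topology

section Series

variable {ι : Type*} {x : ι → ℝ}

noncomputable def esymmSeries (x : ι → ℝ) (k : ℕ) : ℝ :=
  ∑' A : Set.powersetCard ι k, ∏ i ∈ (A : Finset ι), x i

theorem summable_prod_powersetCard (hx0 : 0 ≤ x) (hx : Summable x) :
    ∀ k, Summable fun A : Set.powersetCard ι k => ∏ i ∈ (A : Finset ι), x i
  | 0 => by
    have : Subsingleton (Set.powersetCard ι 0) :=
      ⟨fun A B => Subtype.ext <| by rw [card_eq_zero.1 A.2, card_eq_zero.1 B.2]⟩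
    exact Summable.of_finite
  | k + 1 => by
    classical
    choose a ha using fun A : Set.powersetCard ι (k + 1) =>
      (card_pos (s := (A : Finset ι))).1 (by simp)
    -- `A ↦ (A \ {a A}, a A)` embeds the `(k + 1)`-sets into the summable family of pairs
    let peel (A : Set.powersetCard ι (k + 1)) : Set.powersetCard ι k × ι :=
      (Set.powersetCard.ofCard (s := (A : Finset ι).erase (a A))
        (by simp [card_erase_of_mem (ha A)]), a A)
    have hpeel : Function.Injective peel := fun A B h => by
      have h₁ : (A : Finset ι).erase (a A) = (B : Finset ι).erase (a B) :=
        congrArg Subtype.val (congrArg Prod.fst h)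
      have h₂ : a A = a B := congrArg Prod.snd h
      exact Subtype.ext (by rw [← insert_erase (ha A), ← insert_erase (ha B), h₁, h₂])
    refine (((summable_prod_powersetCard hx0 hx k).mul_of_nonneg hx
      (fun A => prod_nonneg fun i _ => hx0 i) hx0).comp_injective hpeel).congr fun A => ?_
    exact prod_erase_mul _ _ (ha A)

theorem summable_pow_of_nonneg (hx0 : 0 ≤ x) (hx : Summable x) {j : ℕ} (hj : 1 ≤ j) :
    Summable fun i => x i ^ j := by
  refine (hx.mul_left ((∑' i, x i) ^ (j - 1))).of_nonneg_of_le (fun i => pow_nonneg (hx0 i) j)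
    fun i => ?_
  have hxi : 0 ≤ x i := hx0 i
  have hle : x i ≤ ∑' i, x i := hx.le_tsum i fun i _ => hx0 i
  calc x i ^ j = x i ^ (j - 1) * x i := by rw [← pow_succ]; congr 1; omega
    _ ≤ (∑' i, x i) ^ (j - 1) * x i := by gcongr

theorem tendsto_esymm_map_val (hx0 : 0 ≤ x) (hx : Summable x) (k : ℕ) :
    Tendsto (fun S : Finset ι => (S.val.map x).esymm k) atTop (𝓝 (esymmSeries x k)) := by
  classical
  have hsum := (hasSum_subtype_iff_indicator (f := fun A : Finset ι => ∏ i ∈ A, x i)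
    (s := Set.powersetCard ι k)).1 (summable_prod_powersetCard hx0 hx k).hasSum
  have hpowerset : Tendsto (fun S : Finset ι => S.powerset) atTop atTop :=
    tendsto_atTop_finset_of_monotone (fun _ _ => powerset_mono.2)
      fun A => ⟨A, mem_powerset_self A⟩
  refine (hsum.comp hpowerset).congr fun S => ?_
  simp only [Set.indicator_apply, Set.powersetCard.mem_iff, ← sum_filter,
    ← powersetCard_eq_filter, esymm_map_val, Function.comp_apply]

theorem mul_esymmSeries_eq_sum (hx0 : 0 ≤ x) (hx : Summable x) (k : ℕ) :
    k * esymmSeries x k =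
      ∑ j ∈ Icc 1 k, (-1) ^ (j - 1) * esymmSeries x (k - j) * ∑' i, x i ^ j := by
  refine tendsto_nhds_unique ((tendsto_esymm_map_val hx0 hx k).const_mul _) ?_
  simp_rw [mul_esymm_map_val_eq_sum]
  refine tendsto_finsetSum _ fun j hj => ((tendsto_esymm_map_val hx0 hx _).const_mul _).mul ?_
  exact (summable_pow_of_nonneg hx0 hx (mem_Icc.1 hj).1).hasSum

end Series

def strictAntiEquivOrderEmbedding (α : Type*) [LinearOrder α] (r : ℕ) :
    {f : Fin r → α // StrictAnti f} ≃ (Fin r ↪o α) where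
  toFun f :=
    OrderEmbedding.ofStrictMono (f.1 ∘ Fin.rev) (StrictAnti.comp f.2 Fin.rev_strictAnti)
  invFun g := ⟨g ∘ Fin.rev, g.strictMono.comp_strictAnti Fin.rev_strictAnti⟩
  left_inv f := by ext; simp
  right_inv g := by ext; simp

theorem tsum_strictAnti_prod_eq_esymmSeries {α : Type*} [LinearOrder α] (x : α → ℝ) (r : ℕ) :
    ∑' f : {f : Fin r → α // StrictAnti f}, ∏ i, x (f.1 i) = esymmSeries x r := by
  rw [esymmSeries, ← ((strictAntiEquivOrderEmbedding α r).trans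
    Set.powersetCard.ofFinEmbEquiv).tsum_eq]
  refine tsum_congr fun f => ?_
  simp only [strictAntiEquivOrderEmbedding, Equiv.trans_apply, Equiv.coe_fn_mk,
    Set.powersetCard.ofFinEmbEquiv_apply, Set.powersetCard.val_ofFinEmb, prod_map,
    RelEmbedding.coe_toEmbedding, OrderEmbedding.coe_ofStrictMono, Function.comp_apply]
  exact (Equiv.prod_comp Fin.revPerm fun i => x (f.1 i)).symm

theorem multZeta_eq_esymmSeries (r : ℕ) (s : ℝ) :
    multZeta r s = esymmSeries (fun n : ℕ+ => (((n : ℕ) : ℝ) ^ s)⁻¹) r :=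
  tsum_strictAnti_prod_eq_esymmSeries (fun n : ℕ+ => (((n : ℕ) : ℝ) ^ s)⁻¹) r

theorem riemannZetaReal_natCast_mul {s : ℝ} (j : ℕ) :
    riemannZetaReal (j * s) = ∑' n : ℕ+, (((n : ℕ) : ℝ) ^ s)⁻¹ ^ j := by
  refine tsum_congr fun n => ?_
  rw [inv_pow, mul_comm, Real.rpow_mul (by positivity), Real.rpow_natCast]

theorem multZeta_recurrence_general (r : ℕ) (s : ℝ) (hs : 1 < s) :
    (r : ℝ) * multZeta r s =
      ∑ j ∈ Finset.Icc 1 r,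
        (-1 : ℝ) ^ (j - 1) * multZeta (r - j) s * riemannZetaReal ((j : ℝ) * s) := by
  have hx0 : 0 ≤ fun n : ℕ+ => (((n : ℕ) : ℝ) ^ s)⁻¹ := fun n => by positivity
  have hx : Summable fun n : ℕ+ => (((n : ℕ) : ℝ) ^ s)⁻¹ :=
    (Real.summable_nat_rpow_inv.mpr hs).comp_injective PNat.coe_injective
  simp only [multZeta_eq_esymmSeries, riemannZetaReal_natCast_mul]
  exact mul_esymmSeries_eq_sum hx0 hx r

/-- For `r ≥ 1` and real `s > 1`:
`r·ζ_r(s) = ∑_{j=1}^{r} (−1)^{j−1} ζ_{r−j}(s)·ζ(js)`. -/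
theorem multZeta_recurrence (r : ℕ) (hr : 1 ≤ r) (s : ℝ) (hs : 1 < s) :
    (r : ℝ) * multZeta r s =
      ∑ j ∈ Finset.Icc 1 r,
        (-1 : ℝ) ^ (j - 1) * multZeta (r - j) s * riemannZetaReal ((j : ℝ) * s) :=
  multZeta_recurrence_general r s hs
end

section
/- For every integer r ≥ 1 and every real s > 1, the Newton-type recurrence holds: r·t_r(s) = ∑_{j=1}^{r} (−1)^{j−1} t_{r−j}(s)·t(j s). -/
/-!
With `x n = (2n - 1)^(-s)`, `t_r(s)` is the `r`-th elementary symmetric function of the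
summable family `x` (a strictly decreasing `r`-tuple is the same as an `r`-element set) and
`t(js)` is its `j`-th power sum. The recurrence is therefore Newton's identity: it holds for the
finite subfamilies `x|_S` and passes to the limit as `S` exhausts `ℕ+`, because
`∏_{n ∈ A} x n` is summable over finite sets `A`.
-/

/-- The `t`-function for real `s > 1`: `t(s) = ∑_{n≥1} (2n−1)^{-s}`. -/
noncomputable def tFun (s : ℝ) : ℝ :=
  ∑' n : ℕ+, (((2 * (n : ℕ) - 1 : ℕ) : ℝ) ^ s)⁻¹

/-- The multiple `t`-function at identical arguments:
`t_r(s) = ∑_{n₁ > ⋯ > n_r > 0} ((2n₁−1)⋯(2n_r−1))^{-s}`; by convention `t₀(s) = 1`. -/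
noncomputable def multT (r : ℕ) (s : ℝ) : ℝ :=
  ∑' f : {f : Fin r → ℕ+ // StrictAnti f},
    ∏ i, (((2 * (f.1 i : ℕ) - 1 : ℕ) : ℝ) ^ s)⁻¹

open Finset Filter Topology

theorem Finset.sum_antidiagonal_fst_lt_eq_sum_Icc {M : Type*} [AddCommMonoid M] (k : ℕ)
    (f : ℕ → ℕ → M) :
    ∑ a ∈ antidiagonal k with a.1 < k, f a.1 a.2 = ∑ j ∈ Icc 1 k, f (k - j) j := by
  refine sum_nbij' (·.2) (fun j => (k - j, j)) ?_ ?_ ?_ (fun _ _ => rfl) ?_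
  · rintro ⟨i, j⟩
    simp
    omega
  · intro j
    simp
    omega
  · rintro ⟨i, j⟩
    simp
    omega
  · rintro ⟨i, j⟩ h
    rw [mem_filter, HasAntidiagonal.mem_antidiagonal] at h
    rw [← h.1, Nat.add_sub_cancel]

theorem Multiset.mul_esymm_eq_sum_Icc {R : Type*} [CommRing R] (m : Multiset R) (k : ℕ) :
    k * m.esymm k =
      ∑ j ∈ Finset.Icc 1 k, (-1) ^ (j - 1) * m.esymm (k - j) * (m.map (· ^ j)).sum := by
  classical
  have h := congrArg (MvPolynomial.aeval (fun i : m => (i : R)))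
    (MvPolynomial.mul_esymm_eq_sum m R k)
  simp only [map_mul, map_natCast, map_pow, map_neg, map_one, map_sum,
    MvPolynomial.aeval_esymm_eq_multiset_esymm, Multiset.map_univ_coe, MvPolynomial.psum,
    MvPolynomial.aeval_X] at h
  rw [h, Finset.sum_antidiagonal_fst_lt_eq_sum_Icc _
    (fun a b => (-1) ^ a * m.esymm a * ∑ i : m, (i : R) ^ b), Finset.mul_sum]
  refine sum_congr rfl fun j hj => ?_
  obtain ⟨hj1, hjk⟩ := Finset.mem_Icc.mp hj
  have hsign : (-1 : R) ^ (k + 1) * (-1) ^ (k - j) = (-1) ^ (j - 1) := by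
    rw [← pow_add, show k + 1 + (k - j) = j - 1 + 2 * (k - j + 1) by omega, pow_add, pow_mul,
      neg_one_sq, one_pow, mul_one]
  rw [← hsign, sum_eq_multiset_sum, Multiset.map_univ m (· ^ j)]
  ring

section Summable

variable {ι : Type*}

lemma summable_finsetProd_of_summable {x : ι → ℝ} (hx : Summable x) :
    Summable (∏ i ∈ ·, x i) :=
  Summable.of_abs <|
    (summable_finsetProd_of_summable_nonneg (fun i => abs_nonneg (x i)) hx.abs).congr
      fun A => (abs_prod A x).symm

lemma Summable.pow_of_ne_zero {x : ι → ℝ} (hx : Summable x) {j : ℕ} (hj : j ≠ 0) :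
    Summable (x · ^ j) := by
  refine hx.abs.of_norm_bounded_eventually ?_
  filter_upwards [hx.abs.tendsto_cofinite_zero.eventually_le_const zero_lt_one] with i hi
  rw [Real.norm_eq_abs, abs_pow]
  exact pow_le_of_le_one (abs_nonneg _) hi hj

theorem tendsto_sum_powersetCard_of_hasSum {M : Type*} [AddCommMonoid M] [TopologicalSpace M]
    {f : Finset ι → M} {r : ℕ} {a : M}
    (h : HasSum (fun A : {A : Finset ι // A.card = r} => f A) a) :
    Tendsto (fun S : Finset ι => ∑ A ∈ S.powersetCard r, f A) atTop (𝓝 a) := by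
  have hpowerset := (hasSum_subtype_iff_indicator (s := {A | A.card = r}).mp h).comp
    tendsto_finset_powerset_atTop_atTop
  refine hpowerset.congr fun S => ?_
  simp only [Function.comp_apply, Set.indicator, Set.mem_ofPred_eq, powersetCard_eq_filter,
    sum_filter]
  congr!

noncomputable def tsumEsymm (x : ι → ℝ) (r : ℕ) : ℝ :=
  ∑' A : {A : Finset ι // A.card = r}, ∏ i ∈ A.1, x i

theorem Summable.tendsto_esymm_tsumEsymm {x : ι → ℝ} (hx : Summable x) (r : ℕ) :
    Tendsto (fun S : Finset ι => (S.val.map x).esymm r) atTop (𝓝 (tsumEsymm x r)) := by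
  simp only [esymm_map_val]
  exact tendsto_sum_powersetCard_of_hasSum ((summable_finsetProd_of_summable hx).subtype _).hasSum

theorem Summable.mul_tsumEsymm_eq_sum {x : ι → ℝ} (hx : Summable x) (r : ℕ) :
    r * tsumEsymm x r =
      ∑ j ∈ Icc 1 r, (-1) ^ (j - 1) * tsumEsymm x (r - j) * ∑' i, x i ^ j := by
  have hpow (j : ℕ) (hj : j ∈ Icc 1 r) :
      Tendsto (fun S : Finset ι => ((S.val.map x).map (· ^ j)).sum) atTop (𝓝 (∑' i, x i ^ j)) := by
    have : Tendsto (fun S : Finset ι => ∑ i ∈ S, x i ^ j) atTop (𝓝 (∑' i, x i ^ j)) :=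
      (hx.pow_of_ne_zero (j := j) (by grind)).hasSum
    simpa only [Multiset.map_map, Function.comp_def, sum_map_val] using this
  refine tendsto_nhds_unique ((hx.tendsto_esymm_tsumEsymm r).const_mul _) ?_
  simp only [Multiset.mul_esymm_eq_sum_Icc]
  exact tendsto_finsetSum _ fun j hj =>
    ((hx.tendsto_esymm_tsumEsymm _).const_mul _).mul (hpow j hj)

end Summable

def strictAntiEquivCard (α : Type*) [LinearOrder α] (r : ℕ) :
    {f : Fin r → α // StrictAnti f} ≃ {A : Finset α // A.card = r} where
  toFun f := ⟨univ.image f.1, by rw [card_image_of_injective _ f.2.injective, card_fin]⟩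
  invFun A := ⟨A.1.orderEmbOfFin A.2 ∘ Fin.rev,
    (A.1.orderEmbOfFin A.2).strictMono.comp_strictAnti Fin.rev_strictAnti⟩
  left_inv f := by
    have hf : StrictMono (f.1 ∘ Fin.rev) := f.2.comp Fin.rev_strictAnti
    have h := orderEmbOfFin_unique (card_image_of_injective univ f.2.injective ▸ card_fin r)
      (fun i => mem_image_of_mem f.1 (mem_univ i.rev)) hf
    ext i
    simp [← h]
  right_inv A := by
    apply Subtype.ext
    dsimp only
    rw [← image_image, image_univ_of_surjective Fin.rev_surjective, image_orderEmbOfFin_univ]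

theorem tsum_strictAnti_prod_eq_tsumEsymm {α : Type*} [LinearOrder α] (x : α → ℝ) (r : ℕ) :
    ∑' f : {f : Fin r → α // StrictAnti f}, ∏ i, x (f.1 i) = tsumEsymm x r := by
  rw [tsumEsymm, ← (strictAntiEquivCard α r).tsum_eq]
  exact tsum_congr fun f => (prod_image fun i _ j _ hij => f.2.injective hij).symm

noncomputable def tTerm (s : ℝ) (n : ℕ+) : ℝ := (((2 * (n : ℕ) - 1 : ℕ) : ℝ) ^ s)⁻¹

lemma summable_tTerm {s : ℝ} (hs : 1 < s) : Summable (tTerm s) := by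
  have hn : Summable (fun n : ℕ+ => (((n : ℕ) : ℝ) ^ s)⁻¹) :=
    (Real.summable_nat_rpow_inv.mpr hs).comp_injective PNat.coe_injective
  refine hn.of_nonneg_of_le (fun n => inv_nonneg.mpr (by positivity)) fun n => ?_
  have hn_le : (n : ℕ) ≤ 2 * (n : ℕ) - 1 := by omega
  unfold tTerm
  gcongr

lemma tTerm_natCast_mul (j : ℕ) (s : ℝ) (n : ℕ+) : tTerm (j * s) n = tTerm s n ^ j := by
  rw [tTerm, tTerm, inv_pow, mul_comm (j : ℝ), Real.rpow_mul (Nat.cast_nonneg _),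
    Real.rpow_natCast]

theorem multT_recurrence_general (r : ℕ) (s : ℝ) (hs : 1 < s) :
    (r : ℝ) * multT r s =
      ∑ j ∈ Finset.Icc 1 r,
        (-1 : ℝ) ^ (j - 1) * multT (r - j) s * tFun ((j : ℝ) * s) := by
  have hmultT (k : ℕ) : multT k s = tsumEsymm (tTerm s) k :=
    tsum_strictAnti_prod_eq_tsumEsymm (tTerm s) k
  have htFun (j : ℕ) : tFun (j * s) = ∑' n, tTerm s n ^ j :=
    tsum_congr fun n => tTerm_natCast_mul j s n
  simp only [hmultT, htFun]
  exact (summable_tTerm hs).mul_tsumEsymm_eq_sum r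

/-- For `r ≥ 1` and real `s > 1`:
`r·t_r(s) = ∑_{j=1}^{r} (−1)^{j−1} t_{r−j}(s)·t(js)`. -/
theorem multT_recurrence (r : ℕ) (hr : 1 ≤ r) (s : ℝ) (hs : 1 < s) :
    (r : ℝ) * multT r s =
      ∑ j ∈ Finset.Icc 1 r,
        (-1 : ℝ) ^ (j - 1) * multT (r - j) s * tFun ((j : ℝ) * s) :=
  multT_recurrence_general r s hs
end

section
/- Let r ≥ 1 be an integer and s ∈ ℝ with s > 1. Then ζ_r(s) = ∑ (−1)^{r+c₁+c₂+⋯+c_r} / (1^{c₁} c₁! · 2^{c₂} c₂! ⋯ r^{c_r} c_r!) · ζ(s)^{c₁} ζ(2s)^{c₂} ⋯ ζ(rs)^{c_r}, where the sum runs over all tuples (c₁,…,c_r) of nonnegative integers satisfying c₁ + 2c₂ + ⋯ + r·c_r = r. -/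
/-- The (finite) set of all tuples `(c₁, …, c_r)` of nonnegative integers with
`c₁ + 2c₂ + ⋯ + r·c_r = r`.  (Any such tuple satisfies `cᵢ ≤ r`, so they all lie
in the given pi-Finset.) -/
def weightedTuples (r : ℕ) : Finset (Fin r → ℕ) :=
  (Fintype.piFinset fun _ : Fin r => Finset.range (r + 1)).filter
    fun c => ∑ i : Fin r, (i.val + 1) * c i = r

/-!
Truncate to a finite set `S` of positive integers and put `x_n = n^{-s}`. Then `ζ_r(s)` is the
limit of the elementary symmetric polynomial `e_r(x_n : n ∈ S)` and `ζ(js)` the limit of the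
power sum `p_j(x_n : n ∈ S)`. Newton's identities `k e_k = ∑_{j=1}^k (-1)^{j-1} p_j e_{k-j}`
determine `e_k` from the power sums, and the explicit polynomial in the `p_j` satisfies the same
recursion, so the two agree for every `S` and hence in the limit.
-/

open Finset Filter Topology Function

@[to_additive]
lemma Fintype.prod_apply_update_eq_mul {ι α β : Type*} [Fintype ι] [DecidableEq ι]
    [CommMonoid β] (g : ι → α → β) (c : ι → α) (i : ι) {a : α} {z : β}
    (h : g i a = g i (c i) * z) :
    ∏ x, g x (update c i a x) = (∏ x, g x (c x)) * z := by
  simp only [apply_update g, prod_update_of_mem (mem_univ i), h,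
    prod_eq_mul_prod_sdiff_singleton_of_mem (mem_univ i) fun x => g x (c x)]
  ac_rfl

section WeightedTuples

variable {M : ℕ}

def tupleWeight (c : Fin M → ℕ) : ℕ := ∑ i : Fin M, (i.val + 1) * c i

def tuplesOfWeight (M k : ℕ) : Finset (Fin M → ℕ) :=
  (Fintype.piFinset fun _ : Fin M => range (k + 1)).filter fun c => tupleWeight c = k

lemma mul_le_tupleWeight (c : Fin M → ℕ) (i : Fin M) : (i.val + 1) * c i ≤ tupleWeight c :=
  single_le_sum (f := fun i : Fin M => (i.val + 1) * c i) (fun _ _ => Nat.zero_le _) (mem_univ i)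

lemma mem_tuplesOfWeight {k : ℕ} {c : Fin M → ℕ} :
    c ∈ tuplesOfWeight M k ↔ tupleWeight c = k := by
  simp only [tuplesOfWeight, mem_filter, Fintype.mem_piFinset, mem_range, and_iff_right_iff_imp]
  rintro rfl i
  nlinarith [mul_le_tupleWeight c i]

lemma tuplesOfWeight_zero : tuplesOfWeight M 0 = {0} := by
  ext c
  simp [mem_tuplesOfWeight, tupleWeight, sum_eq_zero_iff, funext_iff]

lemma tupleWeight_update_succ (c : Fin M → ℕ) (i : Fin M) :
    tupleWeight (update c i (c i + 1)) = tupleWeight c + (i.val + 1) :=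
  Fintype.sum_apply_update_eq_add (fun (x : Fin M) n => (x.val + 1) * n) c i (mul_add_one _ _)

end WeightedTuples

section EsymmOfPsum

variable {K : Type*} [Field K] {M : ℕ}

def esymmOfPsumTerm (P : ℕ → K) (k : ℕ) (c : Fin M → ℕ) : K :=
  (-1 : K) ^ (k + ∑ i, c i) /
      (∏ i : Fin M, ((((i : ℕ) + 1 : ℕ) : K) ^ c i * ((c i).factorial : K))) *
    ∏ i : Fin M, P ((i : ℕ) + 1) ^ c i

/-- For `k ≤ M` this writes `e_k` through the power sums `p_j = P j`; with `P j = ζ(j s)`,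
`esymmOfPsum P r r` is the right-hand side of `multZeta_explicit`. -/
def esymmOfPsum (P : ℕ → K) (M k : ℕ) : K :=
  ∑ c ∈ tuplesOfWeight M k, esymmOfPsumTerm P k c

lemma esymmOfPsum_zero (P : ℕ → K) (M : ℕ) : esymmOfPsum P M 0 = 1 := by
  simp [esymmOfPsum, esymmOfPsumTerm, tuplesOfWeight_zero]

variable [CharZero K]

lemma mul_esymmOfPsumTerm_update_succ (P : ℕ → K) (k : ℕ) (c : Fin M → ℕ) (i : Fin M) :
    (((i : ℕ) + 1 : ℕ) : K) * ((c i + 1 : ℕ) : K) *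
        esymmOfPsumTerm P (k + (i + 1)) (update c i (c i + 1)) =
      (-1) ^ (i : ℕ) * P (i + 1) * esymmOfPsumTerm P k c := by
  have hcount :=
    Fintype.sum_apply_update_eq_add (fun (_ : Fin M) (n : ℕ) => n) c i (a := c i + 1) rfl
  have hden := Fintype.prod_apply_update_eq_mul
    (fun (x : Fin M) (n : ℕ) => (((x : ℕ) + 1 : ℕ) : K) ^ n * (n.factorial : K)) c i
    (a := c i + 1) (z := (((i : ℕ) + 1 : ℕ) : K) * ((c i + 1 : ℕ) : K))
    (by push_cast [pow_succ, Nat.factorial_succ]; ring)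
  have hpow := Fintype.prod_apply_update_eq_mul
    (fun (x : Fin M) (n : ℕ) => P ((x : ℕ) + 1) ^ n) c i (a := c i + 1) (z := P (i + 1))
    (pow_succ _ _)
  have hD : ∏ x : Fin M, ((((x : ℕ) + 1 : ℕ) : K) ^ c x * ((c x).factorial : K)) ≠ 0 :=
    prod_ne_zero_iff.2 fun x _ => mul_ne_zero
      (pow_ne_zero _ (Nat.cast_ne_zero.2 x.val.succ_ne_zero))
      (Nat.cast_ne_zero.2 (Nat.factorial_ne_zero _))
  simp only [esymmOfPsumTerm, hcount, hden, hpow]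
  field_simp
  ring

lemma sum_mul_esymmOfPsumTerm (P : ℕ → K) (k : ℕ) (i : Fin M) :
    ∑ c ∈ tuplesOfWeight M (k + (i + 1)),
        (((i : ℕ) + 1 : ℕ) : K) * (c i : K) * esymmOfPsumTerm P (k + (i + 1)) c =
      (-1) ^ (i : ℕ) * P (i + 1) * esymmOfPsum P M k := by
  rw [esymmOfPsum, mul_sum, eq_comm]
  refine sum_of_injOn (fun c => update c i (c i + 1)) ?_ ?_ ?_ ?_
  · intro a _ b _ hab
    funext x
    have := congrFun hab x
    rcases eq_or_ne x i with rfl | hx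
    · simpa using this
    · simpa [update_of_ne hx] using this
  · intro c hc
    simp only [mem_coe, mem_tuplesOfWeight, tupleWeight_update_succ] at hc ⊢
    rw [hc]
  · intro c hc hc_not
    obtain hci | ⟨m, hm⟩ : c i = 0 ∨ ∃ m, c i = m + 1 := by cases c i <;> simp
    · simp [hci]
    have hc_eq : update (update c i m) i (update c i m i + 1) = c := by simp [← hm]
    refine absurd ⟨update c i m, ?_, hc_eq⟩ hc_not
    have := tupleWeight_update_succ (update c i m) i
    rw [hc_eq, mem_tuplesOfWeight.1 hc] at this
    simp only [mem_coe, mem_tuplesOfWeight]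
    omega
  · intro c _
    rw [← mul_esymmOfPsumTerm_update_succ]
    simp

lemma natCast_mul_esymmOfPsum (P : ℕ → K) {k : ℕ} (hk : k ≤ M) :
    (k : K) * esymmOfPsum P M k =
      ∑ i ∈ range k, (-1) ^ i * P (i + 1) * esymmOfPsum P M (k - (i + 1)) := by
  -- Split `k = ∑ (i + 1) c_i` over the parts of `c`; removing one part of size `i + 1`
  -- matches the weight-`k` tuples with such a part to the weight-`(k - (i + 1))` tuples.
  calc (k : K) * esymmOfPsum P M k
      = ∑ c ∈ tuplesOfWeight M k, ∑ i : Fin M,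
          (((i : ℕ) + 1 : ℕ) : K) * (c i : K) * esymmOfPsumTerm P k c := by
        rw [esymmOfPsum, mul_sum]
        refine sum_congr rfl fun c hc => ?_
        rw [← sum_mul, ← mem_tuplesOfWeight.1 hc, tupleWeight]
        push_cast
        rfl
    _ = ∑ i : Fin M, if (i : ℕ) < k then
          (-1) ^ (i : ℕ) * P (i + 1) * esymmOfPsum P M (k - (i + 1)) else 0 := by
        rw [sum_comm]
        refine sum_congr rfl fun i _ => ?_
        split_ifs with hik
        · obtain ⟨k', rfl⟩ : ∃ k', k = k' + (i + 1) := ⟨k - (i + 1), by omega⟩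
          rw [sum_mul_esymmOfPsumTerm, Nat.add_sub_cancel]
        · refine sum_eq_zero fun c hc => ?_
          have := mul_le_tupleWeight c i
          rw [mem_tuplesOfWeight.1 hc] at this
          have hci : c i = 0 := by nlinarith
          simp [hci]
    _ = ∑ i ∈ range k, (-1) ^ i * P (i + 1) * esymmOfPsum P M (k - (i + 1)) := by
        rw [Fin.sum_univ_eq_sum_range (fun i => if i < k then
          (-1) ^ i * P (i + 1) * esymmOfPsum P M (k - (i + 1)) else 0), sum_ite,
          sum_const_zero, add_zero]
        congr 1
        ext i
        simp only [mem_filter, mem_range]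
        omega

end EsymmOfPsum

section Newton

variable {K : Type*} [Field K]

lemma eq_of_natCast_mul_eq_sum_range [CharZero K] {P X Y : ℕ → K} {M : ℕ} (h0 : X 0 = Y 0)
    (hX : ∀ k ≤ M, (k : K) * X k = ∑ i ∈ range k, (-1) ^ i * P (i + 1) * X (k - (i + 1)))
    (hY : ∀ k ≤ M, (k : K) * Y k = ∑ i ∈ range k, (-1) ^ i * P (i + 1) * Y (k - (i + 1))) :
    ∀ k ≤ M, X k = Y k := by
  intro k
  induction k using Nat.strong_induction_on with
  | _ k ih =>
    intro hk
    rcases Nat.eq_zero_or_pos k with rfl | hpos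
    · exact h0
    refine mul_left_cancel₀ (Nat.cast_ne_zero.2 hpos.ne') ?_
    rw [hX k hk, hY k hk]
    refine sum_congr rfl fun i hi => ?_
    rw [ih _ (by simp at hi; omega) (by omega)]

lemma natCast_mul_eval_esymm (σ : Type*) [Fintype σ] (y : σ → K) (k : ℕ) :
    (k : K) * MvPolynomial.eval y (MvPolynomial.esymm σ K k) =
      ∑ i ∈ range k, (-1) ^ i * MvPolynomial.eval y (MvPolynomial.psum σ K (i + 1)) *
        MvPolynomial.eval y (MvPolynomial.esymm σ K (k - (i + 1))) := by
  have h := congrArg (MvPolynomial.eval y) (MvPolynomial.mul_esymm_eq_sum σ K k)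
  simp only [map_mul, map_natCast, map_pow, map_neg, map_one, map_sum] at h
  rw [h, sum_filter, ← Nat.sum_antidiagonal_swap]
  simp only [Prod.fst_swap, Prod.snd_swap]
  rw [Nat.sum_antidiagonal_eq_sum_range_succ (fun b a => if a < k then
      (-1) ^ a * MvPolynomial.eval y (MvPolynomial.esymm σ K a) *
        MvPolynomial.eval y (MvPolynomial.psum σ K b) else 0),
    sum_range_succ']
  simp only [Nat.sub_zero, lt_irrefl, if_false, add_zero, mul_sum]
  refine sum_congr rfl fun i hi => ?_
  obtain ⟨m, rfl⟩ : ∃ m, k = m + (i + 1) := ⟨k - (i + 1), by simp at hi; omega⟩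
  have hsign : (-1 : K) ^ (m + (i + 1) + 1) * (-1) ^ m = (-1) ^ i := by
    rw [← pow_add, show m + (i + 1) + 1 + m = i + 2 * (m + 1) by ring, pow_add, pow_mul]
    simp
  rw [if_pos (by omega), Nat.add_sub_cancel]
  linear_combination (MvPolynomial.eval y (MvPolynomial.esymm σ K m) *
    MvPolynomial.eval y (MvPolynomial.psum σ K (i + 1))) * hsign

lemma sum_powersetCard_prod_eq_esymmOfPsum [CharZero K] {α : Type*} [DecidableEq α]
    (S : Finset α) (y : α → K) {M k : ℕ} (hk : k ≤ M) :
    ∑ t ∈ S.powersetCard k, ∏ i ∈ t, y i =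
      esymmOfPsum (fun j => ∑ i ∈ S, y i ^ j) M k := by
  have hesymm : ∀ j, ∑ t ∈ S.powersetCard j, ∏ i ∈ t, y i =
      MvPolynomial.eval (fun i : S => y i) (MvPolynomial.esymm S K j) := by
    intro j
    conv_lhs => rw [← attach_map_val (s := S), powersetCard_map, sum_map]
    simp [MvPolynomial.esymm, prod_map, univ_eq_attach]
  have hpsum : ∀ j, ∑ i ∈ S, y i ^ j =
      MvPolynomial.eval (fun i : S => y i) (MvPolynomial.psum S K j) := by
    intro j
    simp [MvPolynomial.psum, univ_eq_attach, sum_attach S fun i => y i ^ j]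
  refine eq_of_natCast_mul_eq_sum_range (X := fun j => ∑ t ∈ S.powersetCard j, ∏ i ∈ t, y i)
    (by simp [esymmOfPsum_zero]) (fun j _ => ?_)
    (fun j hj => natCast_mul_esymmOfPsum _ hj) k hk
  simp only [hesymm, hpsum]
  exact natCast_mul_eval_esymm S _ j

end Newton

lemma tendsto_esymmOfPsum {ι K : Type*} [Field K] [TopologicalSpace K] [IsTopologicalRing K]
    {l : Filter ι} {P : ι → ℕ → K} {Q : ℕ → K} {M k : ℕ}
    (h : ∀ j, Tendsto (fun x => P x (j + 1)) l (𝓝 (Q (j + 1)))) :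
    Tendsto (fun x => esymmOfPsum (P x) M k) l (𝓝 (esymmOfPsum Q M k)) := by
  simp only [esymmOfPsum, esymmOfPsumTerm]
  refine tendsto_finsetSum _ fun c _ => Tendsto.const_mul _ ?_
  exact tendsto_finsetProd _ fun i _ => (h i).pow (c i)

def strictAntiEquivCardEq (α : Type*) [LinearOrder α] (r : ℕ) :
    {f : Fin r → α // StrictAnti f} ≃ {t : Finset α // t.card = r} where
  toFun f := ⟨univ.map ⟨f.1, f.2.injective⟩, by simp⟩
  invFun t := ⟨fun i => t.1.orderEmbOfFin t.2 i.rev,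
    (t.1.orderEmbOfFin t.2).strictMono.comp_strictAnti Fin.rev_strictAnti⟩
  left_inv f := by
    have := orderEmbOfFin_unique (s := univ.map ⟨f.1, f.2.injective⟩) (by simp)
      (f := f.1 ∘ Fin.rev) (fun i => by simp) (f.2.comp Fin.rev_strictAnti)
    ext i
    simpa using (congrFun this i.rev).symm
  right_inv t := by
    ext x
    simp only [Finset.mem_map, mem_univ, true_and, Embedding.coeFn_mk]
    constructor
    · rintro ⟨i, rfl⟩
      exact orderEmbOfFin_mem _ _ _
    · intro hx
      obtain ⟨j, rfl⟩ : x ∈ Set.range (t.1.orderEmbOfFin t.2) := by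
        rw [range_orderEmbOfFin]; exact hx
      exact ⟨j.rev, by simp⟩

lemma HasSum.tendsto_sum_powersetCard {α β : Type*} [AddCommMonoid β]
    [TopologicalSpace β] {g : Finset α → β} {a : β} {r : ℕ}
    (h : HasSum (fun t : {t : Finset α // t.card = r} => g t) a) :
    Tendsto (fun S : Finset α => ∑ t ∈ S.powersetCard r, g t) atTop (𝓝 a) := by
  let cards (S : Finset α) := (S.powersetCard r).subtype fun t : Finset α => t.card = r
  have hmono : Monotone cards := fun S T hST => subtype_mono (powersetCard_mono hST)
  have hcover : ∀ t : {t : Finset α // t.card = r}, ∃ S, t ∈ cards S :=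
    fun t => ⟨t.1, by simp [cards, mem_powersetCard, t.2]⟩
  refine (h.comp (tendsto_atTop_finset_of_monotone hmono hcover)).congr fun S => ?_
  rw [Function.comp_apply, sum_subtype_eq_sum_filter g,
    filter_true_of_mem fun t ht => (mem_powersetCard.1 ht).2]

lemma hasSum_riemannZetaReal {s : ℝ} (hs : 1 < s) :
    HasSum (fun n : ℕ+ => (((n : ℕ) : ℝ) ^ s)⁻¹) (riemannZetaReal s) :=
  (summable_pnat_iff_summable_nat.2 (Real.summable_nat_rpow_inv.2 hs)).hasSum

lemma hasSum_inv_rpow_pow {s : ℝ} (hs : 1 < s) (j : ℕ) :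
    HasSum (fun n : ℕ+ => ((((n : ℕ) : ℝ) ^ s)⁻¹) ^ (j + 1))
      (riemannZetaReal (((j + 1 : ℕ) : ℝ) * s)) := by
  have hjs : 1 < ((j + 1 : ℕ) : ℝ) * s := one_lt_mul_of_le_of_lt (by simp) hs
  convert hasSum_riemannZetaReal hjs using 2 with n
  rw [inv_pow, ← Real.rpow_natCast, ← Real.rpow_mul (Nat.cast_nonneg _), mul_comm]

lemma hasSum_multZeta (r : ℕ) {s : ℝ} (hs : 1 < s) :
    HasSum (fun t : {t : Finset ℕ+ // t.card = r} => ∏ n ∈ t.1, (((n : ℕ) : ℝ) ^ s)⁻¹)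
      (multZeta r s) := by
  have hsum : Summable fun t : {t : Finset ℕ+ // t.card = r} =>
      ∏ n ∈ t.1, (((n : ℕ) : ℝ) ^ s)⁻¹ :=
    (summable_finsetProd_of_summable_nonneg (fun _ => by positivity)
      (hasSum_riemannZetaReal hs).summable).subtype _
  convert hsum.hasSum
  rw [multZeta, ← (strictAntiEquivCardEq ℕ+ r).tsum_eq]
  simp [strictAntiEquivCardEq, prod_map]

theorem multZeta_explicit_general (r : ℕ) (s : ℝ) (hs : 1 < s) :
    multZeta r s =
      ∑ c ∈ weightedTuples r,
        (-1 : ℝ) ^ (r + ∑ i, c i) /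
          (∏ i : Fin r, ((((i : ℕ) + 1 : ℕ) : ℝ) ^ c i * ((c i).factorial : ℝ))) *
        ∏ i : Fin r, riemannZetaReal ((((i : ℕ) + 1 : ℕ) : ℝ) * s) ^ c i := by
  have hpartial := HasSum.tendsto_sum_powersetCard
    (g := fun t : Finset ℕ+ => ∏ n ∈ t, (((n : ℕ) : ℝ) ^ s)⁻¹) (hasSum_multZeta r hs)
  simp only [sum_powersetCard_prod_eq_esymmOfPsum _ _ (le_refl r)] at hpartial
  refine tendsto_nhds_unique hpartial
    (tendsto_esymmOfPsum (Q := fun j => riemannZetaReal (j * s)) fun j => ?_)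
  exact hasSum_inv_rpow_pow hs j

/-- For `r ≥ 1` and real `s > 1`:
`ζ_r(s) = ∑_{c₁+2c₂+⋯+rc_r=r} (−1)^{r+c₁+⋯+c_r}/(1^{c₁}c₁!⋯r^{c_r}c_r!) · ζ(s)^{c₁}⋯ζ(rs)^{c_r}`. -/
theorem multZeta_explicit (r : ℕ) (hr : 1 ≤ r) (s : ℝ) (hs : 1 < s) :
    multZeta r s =
      ∑ c ∈ weightedTuples r,
        (-1 : ℝ) ^ (r + ∑ i, c i) /
          (∏ i : Fin r, ((((i : ℕ) + 1 : ℕ) : ℝ) ^ c i * ((c i).factorial : ℝ))) *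
        ∏ i : Fin r, riemannZetaReal ((((i : ℕ) + 1 : ℕ) : ℝ) * s) ^ c i :=
  multZeta_explicit_general r s hs
end

section
/- Let r ≥ 1 be an integer. Then for any s ∈ ℝ with s > 1, t_r⋆(s) = ∑_{j=0}^{r} (−1)^{r−j} · 2^{−(r−j)s} · ζ_{r−j}(s) · ζ_j⋆(s). -/
/-- The multiple zeta-star function at identical arguments:
`ζ_r⋆(s) = ∑_{n₁ ≥ ⋯ ≥ n_r ≥ 1} (n₁ ⋯ n_r)^{-s}`; by convention `ζ₀⋆(s) = 1`. -/
noncomputable def multZetaStar (r : ℕ) (s : ℝ) : ℝ :=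
  ∑' f : {f : Fin r → ℕ+ // Antitone f}, ∏ i, (((f.1 i : ℕ) : ℝ) ^ s)⁻¹

/-- The multiple `t`-star function at identical arguments:
`t_r⋆(s) = ∑_{n₁ ≥ ⋯ ≥ n_r ≥ 1} ((2n₁−1)⋯(2n_r−1))^{-s}`. -/
noncomputable def multTStar (r : ℕ) (s : ℝ) : ℝ :=
  ∑' f : {f : Fin r → ℕ+ // Antitone f},
    ∏ i, (((2 * (f.1 i : ℕ) - 1 : ℕ) : ℝ) ^ s)⁻¹

open Finset Filter Topology PowerSeries

section ConsOrder

variable {α : Type*} [Preorder α] {n : ℕ} {a : α} {g : Fin n → α}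

theorem Fin.antitone_cons_iff :
    Antitone (Fin.cons a g : Fin (n + 1) → α) ↔ (∀ i, g i ≤ a) ∧ Antitone g := by
  refine ⟨fun h => ⟨fun i => by simpa using h (Fin.zero_le i.succ),
    fun i j hij => by simpa using h (Fin.succ_le_succ_iff.mpr hij)⟩, fun ⟨ha, hg⟩ => ?_⟩
  intro i j hij
  cases j using Fin.cases with
  | zero => rw [Fin.le_zero_iff.mp hij]
  | succ j =>
    cases i using Fin.cases with
    | zero => simpa using ha j
    | succ i => simpa using hg (Fin.succ_le_succ_iff.mp hij)

theorem Fin.strictAnti_cons_iff :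
    StrictAnti (Fin.cons a g : Fin (n + 1) → α) ↔ (∀ i, g i < a) ∧ StrictAnti g := by
  refine ⟨fun h => ⟨fun i => by simpa using h (Fin.succ_pos i),
    fun i j hij => by simpa using h (Fin.succ_lt_succ_iff.mpr hij)⟩, fun ⟨ha, hg⟩ => ?_⟩
  intro i j hij
  cases j using Fin.cases with
  | zero => exact absurd hij (Fin.not_lt_zero i)
  | succ j =>
    cases i using Fin.cases with
    | zero => simpa using ha j
    | succ i => simpa using hg (Fin.succ_lt_succ_iff.mp hij)

end ConsOrder

theorem Finset.sum_filter_apply_zero_eq {α M : Type*} [AddCommMonoid M] [DecidableEq α] {n : ℕ}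
    {S : Finset (Fin (n + 1) → α)} {T : Finset (Fin n → α)} {a : α}
    (h : ∀ g, Fin.cons a g ∈ S ↔ g ∈ T) (F : (Fin (n + 1) → α) → M) :
    ∑ f ∈ S with f 0 = a, F f = ∑ g ∈ T, F (Fin.cons a g) := by
  have : {f ∈ S | f 0 = a} = T.map ⟨Fin.cons a, Fin.cons_right_injective (α := fun _ => α) a⟩ := by
    ext f
    cases f using Fin.consCases with
    | cons b g =>
      simp only [mem_filter, Fin.cons_zero, mem_map, Function.Embedding.coeFn_mk, Fin.cons_inj]
      constructor
      · rintro ⟨hS, rfl⟩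
        exact ⟨g, (h g).mp hS, rfl, rfl⟩
      · rintro ⟨g, hg, rfl, rfl⟩
        exact ⟨(h g).mpr hg, rfl⟩
  rw [this, sum_map]
  rfl

section BoundedTuples

variable {r : ℕ}

noncomputable def boundedTuples (p : (Fin r → ℕ+) → Prop) (N : ℕ) : Finset (Fin r → ℕ+) := by
  classical exact {f ∈ Fintype.piFinset fun _ => Iio N.succPNat | p f}

variable {p : (Fin r → ℕ+) → Prop} {N : ℕ}

theorem mem_boundedTuples {f : Fin r → ℕ+} :
    f ∈ boundedTuples p N ↔ p f ∧ ∀ i, (f i : ℕ) ≤ N := by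
  simp [boundedTuples, ← PNat.coe_lt_coe, and_comm]

theorem boundedTuples_fin_zero {p : (Fin 0 → ℕ+) → Prop} (hp : p finZeroElim) :
    boundedTuples p N = {finZeroElim} := by
  ext f
  simp [mem_boundedTuples, Subsingleton.elim f finZeroElim, hp]

theorem boundedTuples_bound_zero {p : (Fin (r + 1) → ℕ+) → Prop} : boundedTuples p 0 = ∅ :=
  eq_empty_of_forall_notMem fun f hf => (f 0).ne_zero (by simpa using (mem_boundedTuples.mp hf).2 0)

theorem monotone_boundedTuples : Monotone (boundedTuples p) :=
  fun _ _ hMN _ hf => mem_boundedTuples.mpr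
    ⟨(mem_boundedTuples.mp hf).1, fun i => ((mem_boundedTuples.mp hf).2 i).trans hMN⟩

theorem cons_mem_boundedTuples_antitone {a : ℕ+} {g : Fin r → ℕ+} :
    Fin.cons a g ∈ boundedTuples Antitone N ↔ (a : ℕ) ≤ N ∧ g ∈ boundedTuples Antitone a := by
  simp only [mem_boundedTuples, Fin.antitone_cons_iff, Fin.forall_fin_succ, Fin.cons_zero,
    Fin.cons_succ, ← PNat.coe_le_coe]
  grind

theorem cons_mem_boundedTuples_strictAnti {a : ℕ+} {g : Fin r → ℕ+} :
    Fin.cons a g ∈ boundedTuples StrictAnti N ↔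
      (a : ℕ) ≤ N ∧ g ∈ boundedTuples StrictAnti (a - 1) := by
  simp only [mem_boundedTuples, Fin.strictAnti_cons_iff, Fin.forall_fin_succ, Fin.cons_zero,
    Fin.cons_succ, ← PNat.coe_lt_coe]
  have := a.pos
  grind

end BoundedTuples

section SymmetricSums

variable {R : Type*} [CommSemiring R] (w : ℕ → R)

/-- `hsymmTrunc w r N = h_r(w 1, …, w N)` and `esymmTrunc w r N = e_r(w 1, …, w N)`. -/
noncomputable def hsymmTrunc (r N : ℕ) : R :=
  ∑ f ∈ boundedTuples (r := r) Antitone N, ∏ i, w (f i)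

noncomputable def esymmTrunc (r N : ℕ) : R :=
  ∑ f ∈ boundedTuples (r := r) StrictAnti N, ∏ i, w (f i)

theorem hsymmTrunc_zero_left (N : ℕ) : hsymmTrunc w 0 N = 1 := by
  simp [hsymmTrunc, boundedTuples_fin_zero (Subsingleton.antitone _)]

theorem esymmTrunc_zero_left (N : ℕ) : esymmTrunc w 0 N = 1 := by
  simp [esymmTrunc, boundedTuples_fin_zero (Subsingleton.strictAnti _)]

theorem hsymmTrunc_succ_zero (r : ℕ) : hsymmTrunc w (r + 1) 0 = 0 := by
  simp [hsymmTrunc, boundedTuples_bound_zero]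

theorem esymmTrunc_succ_zero (r : ℕ) : esymmTrunc w (r + 1) 0 = 0 := by
  simp [esymmTrunc, boundedTuples_bound_zero]

theorem hsymmTrunc_succ_succ (r N : ℕ) :
    hsymmTrunc w (r + 1) (N + 1) = hsymmTrunc w (r + 1) N + w (N + 1) * hsymmTrunc w r (N + 1) := by
  classical
  rw [hsymmTrunc, ← sum_filter_not_add_sum_filter _ (fun f => f 0 = N.succPNat),
    sum_filter_apply_zero_eq (T := boundedTuples Antitone (N + 1))
      (by simp [cons_mem_boundedTuples_antitone]), hsymmTrunc, hsymmTrunc, mul_sum]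
  congr 1
  · congr 1
    ext f
    cases f using Fin.consCases with
    | cons a g =>
      simp only [mem_filter, cons_mem_boundedTuples_antitone, Fin.cons_zero, ← PNat.coe_inj,
        Nat.succPNat_coe]
      grind
  · simp [Fin.prod_univ_succ]

theorem esymmTrunc_succ_succ (r N : ℕ) :
    esymmTrunc w (r + 1) (N + 1) = esymmTrunc w (r + 1) N + w (N + 1) * esymmTrunc w r N := by
  classical
  rw [esymmTrunc, ← sum_filter_not_add_sum_filter _ (fun f => f 0 = N.succPNat),
    sum_filter_apply_zero_eq (T := boundedTuples StrictAnti N)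
      (by simp [cons_mem_boundedTuples_strictAnti]), esymmTrunc, esymmTrunc, mul_sum]
  congr 1
  · congr 1
    ext f
    cases f using Fin.consCases with
    | cons a g =>
      simp only [mem_filter, cons_mem_boundedTuples_strictAnti, Fin.cons_zero, ← PNat.coe_inj,
        Nat.succPNat_coe]
      grind
  · simp [Fin.prod_univ_succ]

end SymmetricSums

section GeneratingFunctions

variable {R : Type*} [CommRing R]

noncomputable def geomSeries (a : R) : R⟦X⟧ := mk (a ^ ·)

theorem one_sub_C_mul_X_mul_geomSeries (a : R) : (1 - C a * X) * geomSeries a = 1 := by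
  ext (_ | n) <;> simp [geomSeries, sub_mul, mul_assoc, coeff_one, pow_succ']

noncomputable def hSeries (w : ℕ → R) (N : ℕ) : R⟦X⟧ := ∏ n ∈ range N, geomSeries (w (n + 1))

noncomputable def eSeries (w : ℕ → R) (N : ℕ) : R⟦X⟧ := ∏ n ∈ range N, (1 + C (w (n + 1)) * X)

variable (w : ℕ → R)

theorem hSeries_succ (N : ℕ) : hSeries w (N + 1) = hSeries w N * geomSeries (w (N + 1)) :=
  prod_range_succ _ _

theorem eSeries_succ (N : ℕ) : eSeries w (N + 1) = eSeries w N * (1 + C (w (N + 1)) * X) :=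
  prod_range_succ _ _

theorem coeff_hSeries (r N : ℕ) : coeff r (hSeries w N) = hsymmTrunc w r N := by
  induction N generalizing r with
  | zero => cases r <;> simp [hSeries, coeff_one, hsymmTrunc_zero_left, hsymmTrunc_succ_zero]
  | succ N ihN =>
    have hrec : hSeries w (N + 1) = hSeries w N + C (w (N + 1)) * X * hSeries w (N + 1) := by
      rw [hSeries_succ]
      linear_combination hSeries w N * one_sub_C_mul_X_mul_geomSeries (w (N + 1))
    induction r with
    | zero => rw [hrec, map_add, mul_assoc, coeff_C_mul, coeff_zero_X_mul, ihN,
        hsymmTrunc_zero_left, hsymmTrunc_zero_left, mul_zero, add_zero]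
    | succ r ihr => rw [hrec, map_add, mul_assoc, coeff_C_mul, coeff_succ_X_mul, ihN, ihr,
        hsymmTrunc_succ_succ]

theorem coeff_eSeries (r N : ℕ) : coeff r (eSeries w N) = esymmTrunc w r N := by
  induction N generalizing r with
  | zero => cases r <;> simp [eSeries, coeff_one, esymmTrunc_zero_left, esymmTrunc_succ_zero]
  | succ N ih =>
    have hrec : eSeries w (N + 1) = eSeries w N + C (w (N + 1)) * X * eSeries w N := by
      rw [eSeries_succ]
      ring
    cases r with
    | zero => rw [hrec, map_add, mul_assoc, coeff_C_mul, coeff_zero_X_mul, ih,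
        esymmTrunc_zero_left, esymmTrunc_zero_left, mul_zero, add_zero]
    | succ r => rw [hrec, map_add, mul_assoc, coeff_C_mul, coeff_succ_X_mul, ih, ih,
        esymmTrunc_succ_succ]

theorem eSeries_neg_mul_hSeries (N : ℕ) : eSeries (-w) N * hSeries w N = 1 := by
  rw [eSeries, hSeries, ← prod_mul_distrib]
  refine prod_eq_one fun n _ => ?_
  rw [Pi.neg_apply, map_neg, neg_mul, ← sub_eq_add_neg, one_sub_C_mul_X_mul_geomSeries]

theorem hSeries_two_mul (N : ℕ) :
    hSeries w (2 * N) = hSeries (fun n => w (2 * n - 1)) N * hSeries (fun n => w (2 * n)) N := by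
  induction N with
  | zero => simp [hSeries]
  | succ N ih =>
    rw [hSeries_succ _ N, hSeries_succ _ N, show 2 * (N + 1) - 1 = 2 * N + 1 by omega,
      show 2 * (N + 1) = 2 * N + 1 + 1 by ring, hSeries_succ, hSeries_succ, ih]
    ring

theorem esymmTrunc_neg (r N : ℕ) : esymmTrunc (-w) r N = (-1) ^ r * esymmTrunc w r N := by
  simp [esymmTrunc, prod_neg, mul_sum]

end GeneratingFunctions

theorem hsymmTrunc_odd_eq_sum {R : Type*} [CommRing R] (w : ℕ → R) (r N : ℕ) :
    hsymmTrunc (fun n => w (2 * n - 1)) r N =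
      ∑ j ∈ range (r + 1),
        (-1) ^ (r - j) * esymmTrunc (fun n => w (2 * n)) (r - j) N * hsymmTrunc w j (2 * N) := by
  have hsplit : hSeries (fun n => w (2 * n - 1)) N =
      hSeries w (2 * N) * eSeries (-fun n => w (2 * n)) N := by
    rw [hSeries_two_mul, mul_assoc, mul_comm (hSeries (fun n => w (2 * n)) N),
      eSeries_neg_mul_hSeries, mul_one]
  rw [← coeff_hSeries, hsplit, coeff_mul, Nat.sum_antidiagonal_eq_sum_range_succ
    (fun i j => coeff i (hSeries w (2 * N)) * coeff j (eSeries _ N))]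
  refine sum_congr rfl fun j _ => ?_
  rw [coeff_hSeries, coeff_eSeries, esymmTrunc_neg]
  ring

theorem tendsto_sum_boundedTuples {M : Type*} [AddCommMonoid M] [TopologicalSpace M] {r : ℕ}
    {p : (Fin r → ℕ+) → Prop} {F : (Fin r → ℕ+) → M} (hF : Summable fun f : Subtype p => F f) :
    Tendsto (fun N => ∑ f ∈ boundedTuples p N, F f) atTop (𝓝 (∑' f : Subtype p, F f)) := by
  classical
  have hmono : Monotone fun N => (boundedTuples p N).subtype p :=
    fun _ _ hMN => subtype_mono (monotone_boundedTuples hMN)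
  have hexhaust : ∀ f : Subtype p, ∃ N, f ∈ (boundedTuples p N).subtype p := fun f =>
    ⟨∑ i, (f.1 i : ℕ), mem_subtype.mpr <| mem_boundedTuples.mpr ⟨f.2, fun i =>
      single_le_sum (f := fun i => (f.1 i : ℕ)) (fun _ _ => Nat.zero_le _) (mem_univ i)⟩⟩
  refine (hF.hasSum.comp (tendsto_atTop_finset_of_monotone hmono hexhaust)).congr fun N => ?_
  exact sum_subtype_of_mem F fun f hf => (mem_boundedTuples.mp hf).1

theorem summable_prod_comp {α : Type*} {v : α → ℝ} (h0 : ∀ a, 0 ≤ v a) (hv : Summable v) (r : ℕ) :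
    Summable fun f : Fin r → α => ∏ i, v (f i) := by
  induction r with
  | zero => exact .of_finite
  | succ r ih =>
    rw [← (Fin.consEquiv fun _ => α).summable_iff]
    refine (hv.mul_of_nonneg ih (fun a => h0 a) fun f => prod_nonneg fun i _ => h0 _).congr ?_
    simp [Fin.prod_univ_succ]

section Limits

variable {w : ℕ → ℝ}

theorem tendsto_hsymmTrunc (h0 : ∀ n, 0 ≤ w n) (hw : Summable w) (r : ℕ) :
    Tendsto (hsymmTrunc w r) atTop
      (𝓝 (∑' f : {f : Fin r → ℕ+ // Antitone f}, ∏ i, w (f.1 i))) :=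
  tendsto_sum_boundedTuples ((summable_prod_comp (fun _ => h0 _)
    (hw.comp_injective PNat.coe_injective) r).subtype _)

theorem tendsto_esymmTrunc (h0 : ∀ n, 0 ≤ w n) (hw : Summable w) (r : ℕ) :
    Tendsto (esymmTrunc w r) atTop
      (𝓝 (∑' f : {f : Fin r → ℕ+ // StrictAnti f}, ∏ i, w (f.1 i))) :=
  tendsto_sum_boundedTuples ((summable_prod_comp (fun _ => h0 _)
    (hw.comp_injective PNat.coe_injective) r).subtype _)

end Limits

theorem tsum_prod_rpow_inv_two_mul (m : ℕ) (s : ℝ) :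
    ∑' f : {f : Fin m → ℕ+ // StrictAnti f}, ∏ i, (((2 * (f.1 i : ℕ) : ℕ) : ℝ) ^ s)⁻¹ =
      ((2 : ℝ) ^ ((m : ℝ) * s))⁻¹ * multZeta m s := by
  rw [multZeta, ← tsum_mul_left, mul_comm (m : ℝ), Real.rpow_mul zero_le_two, Real.rpow_natCast,
    ← inv_pow]
  refine tsum_congr fun f => ?_
  rw [mul_comm]
  simp [Real.mul_rpow, prod_mul_distrib]

theorem multTStar_eq_sum_multZeta_mul_multZetaStar_general (r : ℕ) (s : ℝ) (hs : 1 < s) :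
    multTStar r s =
      ∑ j ∈ Finset.range (r + 1),
        (-1 : ℝ) ^ (r - j) * ((2 : ℝ) ^ (((r - j : ℕ) : ℝ) * s))⁻¹ *
          multZeta (r - j) s * multZetaStar j s := by
  set w : ℕ → ℝ := fun n => ((n : ℝ) ^ s)⁻¹
  have h0 : ∀ n, 0 ≤ w n := fun n => inv_nonneg.mpr (Real.rpow_nonneg n.cast_nonneg s)
  have hw : Summable w := Real.summable_nat_rpow_inv.mpr hs
  have hodd : Tendsto (hsymmTrunc (fun n => w (2 * n - 1)) r) atTop (𝓝 (multTStar r s)) :=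
    tendsto_hsymmTrunc (fun _ => h0 _)
      (hw.comp_injective fun a b (h : 2 * a - 1 = 2 * b - 1) => by omega) r
  have heven (m : ℕ) : Tendsto (esymmTrunc (fun n => w (2 * n)) m) atTop
      (𝓝 (((2 : ℝ) ^ ((m : ℝ) * s))⁻¹ * multZeta m s)) := by
    rw [← tsum_prod_rpow_inv_two_mul]
    exact tendsto_esymmTrunc (fun _ => h0 _)
      (hw.comp_injective fun a b (h : 2 * a = 2 * b) => by omega) m
  have hall (j : ℕ) : Tendsto (fun N => hsymmTrunc w j (2 * N)) atTop (𝓝 (multZetaStar j s)) :=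
    (tendsto_hsymmTrunc h0 hw j).comp (tendsto_id.const_mul_atTop' two_pos)
  refine tendsto_nhds_unique hodd ?_
  rw [funext (hsymmTrunc_odd_eq_sum w r)]
  refine tendsto_finsetSum _ fun j _ => ?_
  simpa only [mul_assoc] using ((heven (r - j)).const_mul _).mul (hall j)

/-- For `r ≥ 1` and real `s > 1`:
`t_r⋆(s) = ∑_{j=0}^{r} (−1)^{r−j} · 2^{−(r−j)s} · ζ_{r−j}(s) · ζ_j⋆(s)`. -/
theorem multTStar_eq_sum_multZeta_mul_multZetaStar (r : ℕ) (hr : 1 ≤ r) (s : ℝ) (hs : 1 < s) :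
    multTStar r s =
      ∑ j ∈ Finset.range (r + 1),
        (-1 : ℝ) ^ (r - j) * ((2 : ℝ) ^ (((r - j : ℕ) : ℝ) * s))⁻¹ *
          multZeta (r - j) s * multZetaStar j s :=
  multTStar_eq_sum_multZeta_mul_multZetaStar_general r s hs
end

section
/- Let r ≥ 1 be an integer. Then ∑ (1/2)^{c₁+c₂+⋯+c_r} / (1^{c₁} c₁! · 2^{c₂} c₂! ⋯ r^{c_r} c_r!) = (1/4^r)·C(2r, r), where the sum runs over all tuples (c₁,…,c_r) of nonnegative integers satisfying c₁ + 2c₂ + ⋯ + r·c_r = r, and C(2r,r) denotes the central binomial coefficient. Equivalently, the value ζ_r(0) of the meromorphic continuation of the multiple zeta function at identical arguments at s = 0 equals (−1)^r·C(2r,r)/4^r. -/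
/-!
Let `S_n(x) = cycleTypeSum r x n` be the sum of `x ^ (Σ cᵢ) / ∏ (i+1) ^ cᵢ cᵢ!` over the tuples
of weight `Σ (i+1) cᵢ = n`. Counting each tuple with multiplicity its weight `n` and removing one
part of size `i + 1` from it gives `n S_n = x Σ_{j<n} S_j` (for `n ≤ r`), hence
`(n+1) S_{n+1} = (x+n) S_n` and `S_n(x) = x (x+1) ⋯ (x+n-1) / n!`, which at `x = 1/2` is
`C(2n, n) / 4 ^ n`. With `ζ(0) = -1/2` the signs `(-1) ^ (r + Σ cᵢ) (-1) ^ (Σ cᵢ)` combine to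
`(-1) ^ r`, reducing the value at `s = 0` to the same sum.
-/

open Finset Function

@[to_additive]
theorem prod_apply_update_mul {ι M : Type*} [Fintype ι] [DecidableEq ι] [CommMonoid M]
    (f : ι → ℕ → M) (c : ι → ℕ) (i : ι) (v : ℕ) :
    (∏ j, f j (update c i v j)) * f i (c i) = (∏ j, f j (c j)) * f i v := by
  rw [prod_congr rfl fun j _ => apply_update f c i v j, prod_update_of_mem (mem_univ i),
    prod_eq_mul_prod_sdiff_singleton_of_mem (mem_univ i) fun j => f j (c j)]
  ac_rfl

namespace CycleType

def tuplesOfWeight (r n : ℕ) : Finset (Fin r → ℕ) :=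
  (Fintype.piFinset fun _ : Fin r => range (n + 1)).filter
    fun c => ∑ i : Fin r, (i.val + 1) * c i = n

variable {r n m : ℕ} {c : Fin r → ℕ}

theorem mul_apply_le_of_sum_eq (hc : ∑ j : Fin r, (j.val + 1) * c j = n) (i : Fin r) :
    (i.val + 1) * c i ≤ n :=
  hc ▸ single_le_sum (f := fun j : Fin r => (j.val + 1) * c j) (by simp) (mem_univ i)

theorem mem_tuplesOfWeight : c ∈ tuplesOfWeight r n ↔ ∑ i : Fin r, (i.val + 1) * c i = n := by
  refine ⟨fun h => (mem_filter.1 h).2, fun h => mem_filter.2 ⟨?_, h⟩⟩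
  refine Fintype.mem_piFinset.2 fun i => mem_range_succ_iff.2 ?_
  exact (Nat.le_mul_of_pos_left _ i.val.succ_pos).trans (mul_apply_le_of_sum_eq h i)

theorem update_mem_tuplesOfWeight_iff (i : Fin r) (v : ℕ) :
    update c i v ∈ tuplesOfWeight r n ↔
      ∑ j : Fin r, (j.val + 1) * c j + (i.val + 1) * v = n + (i.val + 1) * c i := by
  rw [mem_tuplesOfWeight, ← sum_apply_update_add (fun (j : Fin r) k => (j.val + 1) * k)]
  omega

theorem update_succ_mem_tuplesOfWeight (hc : c ∈ tuplesOfWeight r m) (i : Fin r) :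
    update c i (c i + 1) ∈ tuplesOfWeight r (m + (i.val + 1)) := by
  rw [update_mem_tuplesOfWeight_iff, mem_tuplesOfWeight.1 hc]
  ring

theorem update_pred_mem_tuplesOfWeight {i : Fin r} (hc : c ∈ tuplesOfWeight r (m + (i.val + 1)))
    (hi : c i ≠ 0) : update c i (c i - 1) ∈ tuplesOfWeight r m := by
  obtain ⟨k, hk⟩ := Nat.exists_eq_add_one_of_ne_zero hi
  rw [update_mem_tuplesOfWeight_iff, mem_tuplesOfWeight.1 hc, hk, Nat.add_sub_cancel]
  ring

theorem apply_eq_zero_of_mem_tuplesOfWeight (hc : c ∈ tuplesOfWeight r n) {i : Fin r}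
    (hi : n ≤ i.val) : c i = 0 := by
  have := mul_apply_le_of_sum_eq (mem_tuplesOfWeight.1 hc) i
  by_contra h
  nlinarith [Nat.pos_of_ne_zero h]

variable {K : Type*} [Field K] (x : K)

/-- `n! * cycleTypeWeight 1 c` is the number of permutations of `Fin n` with `c i` cycles of
length `i + 1`, where `n = Σ (i+1) c i`. -/
def cycleTypeWeight (c : Fin r → ℕ) : K :=
  x ^ (∑ i, c i) / ∏ i : Fin r, ((((i : ℕ) + 1 : ℕ) : K) ^ c i * ((c i).factorial : K))

variable (r) in
def cycleTypeSum (n : ℕ) : K :=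
  ∑ c ∈ tuplesOfWeight r n, cycleTypeWeight x c

theorem cycleTypeSum_zero : cycleTypeSum r x 0 = 1 := by
  have : tuplesOfWeight r 0 = {0} := by
    ext c
    simp [mem_tuplesOfWeight, sum_eq_zero_iff, funext_iff]
  simp [cycleTypeSum, this, cycleTypeWeight]

variable [CharZero K]

theorem mul_cycleTypeWeight_update_succ (i : Fin r) :
    (((i.val + 1) * (c i + 1) : ℕ) : K) * cycleTypeWeight x (update c i (c i + 1))
      = x * cycleTypeWeight x c := by
  rw [cycleTypeWeight, cycleTypeWeight]
  have hsum := sum_apply_update_add (fun _ k => k) c i (c i + 1)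
  have hprod := prod_apply_update_mul
    (fun (j : Fin r) k => (((j : ℕ) + 1 : ℕ) : K) ^ k * (k.factorial : K)) c i (c i + 1)
  set P := ∏ j : Fin r, ((((j : ℕ) + 1 : ℕ) : K) ^ c j * ((c j).factorial : K))
  set P' := ∏ j : Fin r, ((((j : ℕ) + 1 : ℕ) : K) ^ update c i (c i + 1) j *
    ((update c i (c i + 1) j).factorial : K))
  have hP : P ≠ 0 :=
    prod_ne_zero_iff.2 fun j _ => by simp [Nat.factorial_ne_zero, Nat.cast_add_one_ne_zero]
  have hfi : ((((i : ℕ) + 1 : ℕ) : K) ^ c i * ((c i).factorial : K)) ≠ 0 := by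
    simp [Nat.factorial_ne_zero, Nat.cast_add_one_ne_zero]
  have hP' : P' = P * (((i.val + 1) * (c i + 1) : ℕ) : K) := by
    refine mul_right_cancel₀ hfi (hprod.trans ?_)
    push_cast [pow_succ, Nat.factorial_succ]
    ring
  rw [show ∑ j, update c i (c i + 1) j = ∑ j, c j + 1 by omega, hP']
  field_simp
  ring

theorem sum_mul_cycleTypeWeight_add (i : Fin r) (m : ℕ) :
    ∑ c ∈ tuplesOfWeight r (m + (i.val + 1)), (((i.val + 1) * c i : ℕ) : K) * cycleTypeWeight x c
      = x * cycleTypeSum r x m := by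
  rw [← sum_filter_of_ne (p := fun c => c i ≠ 0) fun c _ hc h0 => by simp [h0] at hc,
    cycleTypeSum, mul_sum]
  refine (sum_nbij' (fun c => update c i (c i + 1)) (fun c => update c i (c i - 1))
    ?_ ?_ ?_ ?_ ?_).symm
  · exact fun c hc => mem_filter.2 ⟨update_succ_mem_tuplesOfWeight hc i, by simp⟩
  · exact fun c hc => update_pred_mem_tuplesOfWeight (mem_filter.1 hc).1 (mem_filter.1 hc).2
  · intro c _
    simp
  · intro c hc
    simp [Nat.sub_add_cancel (Nat.pos_of_ne_zero (mem_filter.1 hc).2)]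
  · intro c _
    rw [← mul_cycleTypeWeight_update_succ, update_self]

theorem sum_mul_cycleTypeWeight (i : Fin r) :
    ∑ c ∈ tuplesOfWeight r n, (((i.val + 1) * c i : ℕ) : K) * cycleTypeWeight x c
      = if i.val < n then x * cycleTypeSum r x (n - 1 - i.val) else 0 := by
  split_ifs with hi
  · obtain ⟨m, rfl⟩ := Nat.exists_eq_add_of_lt hi
    rw [show i.val + m + 1 = m + (i.val + 1) by ring, sum_mul_cycleTypeWeight_add]
    congr 2
    omega
  · refine sum_eq_zero fun c hc => ?_
    rw [apply_eq_zero_of_mem_tuplesOfWeight hc (not_lt.1 hi)]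
    simp

theorem natCast_mul_cycleTypeSum (hn : n ≤ r) :
    (n : K) * cycleTypeSum r x n = x * ∑ j ∈ range n, cycleTypeSum r x j := by
  calc (n : K) * cycleTypeSum r x n
      = ∑ c ∈ tuplesOfWeight r n, ∑ i : Fin r,
          (((i.val + 1) * c i : ℕ) : K) * cycleTypeWeight x c := by
        rw [cycleTypeSum, mul_sum]
        refine sum_congr rfl fun c hc => ?_
        rw [← sum_mul, ← Nat.cast_sum, mem_tuplesOfWeight.1 hc]
    _ = ∑ k ∈ range r, if k < n then x * cycleTypeSum r x (n - 1 - k) else 0 := by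
        rw [sum_comm, ← Fin.sum_univ_eq_sum_range (fun k => if k < n then _ else 0)]
        exact sum_congr rfl fun i _ => sum_mul_cycleTypeWeight x i
    _ = ∑ k ∈ range n, x * cycleTypeSum r x (n - 1 - k) := by
        rw [← sum_filter, show (range r).filter (· < n) = range n by ext; simp; omega]
    _ = x * ∑ j ∈ range n, cycleTypeSum r x j := by
        rw [← mul_sum, sum_range_reflect (cycleTypeSum r x) n]

theorem succ_mul_cycleTypeSum_succ (hn : n + 1 ≤ r) :
    (n + 1 : K) * cycleTypeSum r x (n + 1) = (x + n) * cycleTypeSum r x n := by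
  have hsucc := natCast_mul_cycleTypeSum x hn
  have hself := natCast_mul_cycleTypeSum x (n.le_succ.trans hn)
  rw [sum_range_succ] at hsucc
  push_cast at hsucc
  linear_combination hsucc - hself

theorem cycleTypeSum_eq (hn : n ≤ r) :
    cycleTypeSum r x n = (ascPochhammer K n).eval x / n.factorial := by
  induction n with
  | zero => simp [cycleTypeSum_zero]
  | succ n ih =>
    have h := succ_mul_cycleTypeSum_succ x hn
    rw [ih (n.le_succ.trans hn)] at h
    rw [ascPochhammer_succ_eval, Nat.factorial_succ]
    push_cast
    field_simp
    linear_combination h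

theorem ascPochhammer_eval_half_div_factorial (n : ℕ) :
    (ascPochhammer K n).eval (1 / 2 : K) / n.factorial = ((2 * n).choose n : K) / 4 ^ n := by
  induction n with
  | zero => simp
  | succ n ih =>
    have hrec : ((2 * (n + 1)).choose (n + 1) : K)
        = 2 * (2 * n + 1) * (2 * n).choose n / (n + 1) := by
      rw [eq_div_iff (Nat.cast_add_one_ne_zero n), mul_comm]
      exact_mod_cast Nat.succ_mul_centralBinom_succ n
    rw [ascPochhammer_succ_eval, Nat.factorial_succ, mul_comm (n + 1), Nat.cast_mul,
      ← div_mul_div_comm, ih, hrec]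
    field_simp
    push_cast
    ring

variable (r) in
theorem cycleTypeSum_half_self :
    cycleTypeSum r (1 / 2 : K) r = ((2 * r).choose r : K) / 4 ^ r :=
  (cycleTypeSum_eq _ le_rfl).trans (ascPochhammer_eval_half_div_factorial r)

end CycleType

open CycleType in
theorem multZeta_at_zero_general (r : ℕ) :
    (∑ c ∈ weightedTuples r,
        ((1 : ℚ) / 2) ^ (∑ i, c i) /
          (∏ i : Fin r, ((((i : ℕ) + 1 : ℕ) : ℚ) ^ c i * ((c i).factorial : ℚ)))
      = ((2 * r).choose r : ℚ) / 4 ^ r) ∧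
    (∑ c ∈ weightedTuples r,
        (-1 : ℂ) ^ (r + ∑ i, c i) /
          (∏ i : Fin r, ((((i : ℕ) + 1 : ℕ) : ℂ) ^ c i * ((c i).factorial : ℂ))) *
        ∏ i : Fin r, riemannZeta ((((i : ℕ) + 1 : ℕ) : ℂ) * 0) ^ c i
      = (-1 : ℂ) ^ r * ((2 * r).choose r : ℂ) / 4 ^ r) := by
  refine ⟨cycleTypeSum_half_self r, ?_⟩
  have zeta_term (c : Fin r → ℕ) :
      (-1 : ℂ) ^ (r + ∑ i, c i) /
          (∏ i : Fin r, ((((i : ℕ) + 1 : ℕ) : ℂ) ^ c i * ((c i).factorial : ℂ))) *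
        ∏ i : Fin r, riemannZeta ((((i : ℕ) + 1 : ℕ) : ℂ) * 0) ^ c i
      = (-1 : ℂ) ^ r * cycleTypeWeight (1 / 2) c := by
    have hsq : ((-1 : ℂ) ^ ∑ i, c i) ^ 2 = 1 := by rw [← pow_mul, pow_mul', neg_one_sq, one_pow]
    have hzeta : ((-1 : ℂ) / 2) ^ ∑ i, c i = (-1) ^ (∑ i, c i) * (1 / 2) ^ ∑ i, c i := by
      rw [← mul_pow, neg_one_mul, neg_div]
    simp only [mul_zero, riemannZeta_zero, prod_pow_eq_pow_sum, hzeta, cycleTypeWeight, pow_add]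
    generalize (-1 : ℂ) ^ ∑ i, c i = s at hsq ⊢
    linear_combination (-1 : ℂ) ^ r * (1 / 2) ^ (∑ i, c i) /
      (∏ i : Fin r, ((((i : ℕ) + 1 : ℕ) : ℂ) ^ c i * ((c i).factorial : ℂ))) * hsq
  rw [sum_congr rfl fun c _ => zeta_term c, ← mul_sum, mul_div_assoc]
  exact congrArg _ (cycleTypeSum_half_self r)

/-- For `r ≥ 1`:
`∑_{c₁+2c₂+⋯+rc_r=r} (1/2)^{c₁+⋯+c_r}/(1^{c₁}c₁!⋯r^{c_r}c_r!) = C(2r,r)/4^r`.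
Equivalently (substituting the continued value `ζ(0) = −1/2` for every factor `ζ(i·0)`
in the explicit formula for `ζ_r(s)`), the meromorphically continued value `ζ_r(0)`
equals `(−1)^r C(2r,r)/4^r`. -/
theorem multZeta_at_zero (r : ℕ) (hr : 1 ≤ r) :
    (∑ c ∈ weightedTuples r,
        ((1 : ℚ) / 2) ^ (∑ i, c i) /
          (∏ i : Fin r, ((((i : ℕ) + 1 : ℕ) : ℚ) ^ c i * ((c i).factorial : ℚ)))
      = ((2 * r).choose r : ℚ) / 4 ^ r) ∧
    (∑ c ∈ weightedTuples r,
        (-1 : ℂ) ^ (r + ∑ i, c i) /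
          (∏ i : Fin r, ((((i : ℕ) + 1 : ℕ) : ℂ) ^ c i * ((c i).factorial : ℂ))) *
        ∏ i : Fin r, riemannZeta ((((i : ℕ) + 1 : ℕ) : ℂ) * 0) ^ c i
      = (-1 : ℂ) ^ r * ((2 * r).choose r : ℂ) / 4 ^ r) :=
  multZeta_at_zero_general r
end

section
/- For every integer r ≥ 1, the multiple zeta value at identical argument 2 satisfies ζ_r(2) = ∑_{n₁ > n₂ > ⋯ > n_r > 0} (n₁ n₂ ⋯ n_r)^{-2} = π^{2r} / (2r+1)!. -/
/-!
Euler's product `sin (π x) / (π x) = ∏ (1 - x² / n²)` is absolutely convergent, so it can be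
expanded: the coefficient of `(-x²)^r` is the `r`-th elementary symmetric function of the numbers
`1 / n²`, a sum over `r`-element sets of positive integers, which is `ζ_r(2)` once each set is
listed in decreasing order. The Taylor series of `sin (π x) / (π x)` has `π^(2r) / (2r+1)!` there
instead. Both sides are power series in `t = -x²` agreeing for all `t < 0`, so by the identity
theorem their coefficients coincide.
-/

open Filter Finset Topology Real

theorem Real.hasSum_sin_div {y : ℝ} (hy : y ≠ 0) :
    HasSum (fun n : ℕ ↦ (-y ^ 2) ^ n / ((2 * n + 1).factorial : ℝ)) (sin y / y) := by
  refine ((hasSum_sin y).div_const y).congr_fun fun n ↦ ?_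
  rw [neg_pow, ← pow_mul, pow_succ]
  field_simp

theorem Real.hasProd_one_sub_sq_div_sq {x : ℝ} (hx : x ≠ 0) :
    HasProd (fun n : ℕ+ ↦ 1 - x ^ 2 / ((n : ℕ) : ℝ) ^ 2) (sin (π * x) / (π * x)) := by
  have hm : Multipliable fun n : ℕ+ ↦ 1 - x ^ 2 / ((n : ℕ) : ℝ) ^ 2 := by
    simp_rw [sub_eq_add_neg]
    refine multipliable_one_add_of_summable ?_
    simpa [div_eq_mul_inv] using
      (summable_pnat_iff_summable_nat.2 (summable_nat_pow_inv.2 one_lt_two)).mul_left (x ^ 2)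
  convert hm.hasProd
  refine (eq_div_of_mul_eq (mul_ne_zero pi_ne_zero hx)
    (tendsto_nhds_unique ?_ (tendsto_euler_sin_prod x))).symm
  have hprod := (hasProd_pnat_iff_hasProd_succ (f := fun n : ℕ ↦ 1 - x ^ 2 / (n : ℝ) ^ 2)).1
    hm.hasProd
  simpa [mul_comm] using hprod.tendsto_prod_nat.const_mul (π * x)

namespace MultipleZetaTwo

section PowerSeries

open FormalMultilinearSeries

variable {𝕜 : Type*} [NontriviallyNormedField 𝕜] [CompleteSpace 𝕜]

theorem hasFPowerSeriesAt_tsum_mul_pow {c : ℕ → 𝕜} {ρ : NNReal} (hρ : 0 < ρ)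
    (hc : Summable fun n ↦ ‖c n‖ * (ρ : ℝ) ^ n) :
    HasFPowerSeriesAt (fun t ↦ ∑' n, c n * t ^ n) (ofScalars 𝕜 c) 0 := by
  have hρc : (ρ : ENNReal) ≤ (ofScalars 𝕜 c).radius :=
    (ofScalars 𝕜 c).le_radius_of_summable (by simpa only [ofScalars_norm] using hc)
  convert ((ofScalars 𝕜 c).hasFPowerSeriesOnBall
    ((ENNReal.coe_pos.2 hρ).trans_le hρc)).hasFPowerSeriesAt
  exact (ofScalars_sum_eq (E := 𝕜) c _).symm

theorem eq_of_frequently_tsum_mul_pow_eq {c d : ℕ → 𝕜} {ρ : NNReal} (hρ : 0 < ρ)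
    (hc : Summable fun n ↦ ‖c n‖ * (ρ : ℝ) ^ n) (hd : Summable fun n ↦ ‖d n‖ * (ρ : ℝ) ^ n)
    (h : ∃ᶠ t in 𝓝[≠] 0, ∑' n, c n * t ^ n = ∑' n, d n * t ^ n) : c = d := by
  have hc' := hasFPowerSeriesAt_tsum_mul_pow hρ hc
  have hd' := hasFPowerSeriesAt_tsum_mul_pow hρ hd
  have hcd := (hc'.analyticAt.frequently_eq_iff_eventually_eq hd'.analyticAt).1 h
  exact ofScalars_series_injective 𝕜 (E := 𝕜) ((hc'.congr hcd).eq_formalMultilinearSeries hd')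

end PowerSeries

variable {ι : Type*}

noncomputable def esymm (a : ι → ℝ) (r : ℕ) : ℝ :=
  ∑' s : {s : Finset ι // s.card = r}, ∏ i ∈ s.1, a i

section Summable

variable {a : ι → ℝ}

theorem summable_prod_mul (ha : Summable a) (t : ℝ) :
    Summable fun s : Finset ι ↦ ∏ i ∈ s, t * a i :=
  summable_finsetProd_of_summable_norm <| by simpa only [norm_mul] using ha.norm.mul_left ‖t‖

theorem hasSum_esymm (ha : Summable a) (r : ℕ) :
    HasSum (fun s : {s : Finset ι // s.card = r} ↦ ∏ i ∈ s.1, a i) (esymm a r) := by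
  have h := (summable_prod_mul ha 1).subtype (fun s ↦ s.card = r)
  simp only [one_mul] at h
  exact h.hasSum

theorem hasSum_esymm_mul_pow (ha : Summable a) (t : ℝ) :
    HasSum (fun r ↦ esymm a r * t ^ r) (∏' i, (1 + t * a i)) := by
  have hsum := summable_prod_mul ha t
  rw [tprod_one_add hsum]
  -- group the finite sets by cardinality
  refine ((Equiv.sigmaFiberEquiv Finset.card).hasSum_iff.2 hsum.hasSum).sigma fun r ↦ ?_
  refine ((hasSum_esymm ha r).mul_right (t ^ r)).congr_fun fun s ↦ ?_
  simp [prod_mul_distrib, s.2, mul_comm]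

end Summable

section StrictAnti

variable [LinearOrder ι]

noncomputable def strictAntiEquiv (r : ℕ) :
    {f : Fin r → ι // StrictAnti f} ≃ {s : Finset ι // s.card = r} :=
  Equiv.ofBijective
    (fun f ↦ ⟨univ.image f.1, by rw [card_image_of_injective _ f.2.injective, card_fin]⟩) <| by
    refine ⟨fun f g hfg ↦ ?_, fun s ↦ ?_⟩
    · have hrange := congrArg (fun s ↦ ((s.1 : Finset ι) : Set ι)) hfg
      simp only [coe_image, coe_univ, Set.image_univ] at hrange
      exact Subtype.ext ((f.2.range_inj g.2).1 hrange)
    · refine ⟨⟨fun i ↦ s.1.orderEmbOfFin s.2 i.rev,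
        (s.1.orderEmbOfFin s.2).strictMono.comp_strictAnti Fin.rev_strictAnti⟩, ?_⟩
      apply Subtype.ext
      apply coe_injective
      simp only [coe_image, coe_univ, Set.image_univ]
      exact (Fin.rev_surjective.range_comp _).trans (range_orderEmbOfFin _ _)

theorem tsum_prod_strictAnti_eq_esymm (a : ι → ℝ) (r : ℕ) :
    ∑' f : {f : Fin r → ι // StrictAnti f}, ∏ i, a (f.1 i) = esymm a r := by
  rw [esymm, ← (strictAntiEquiv r).tsum_eq]
  exact tsum_congr fun f ↦ (prod_image fun i _ j _ h ↦ f.2.injective h).symm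

end StrictAnti

theorem esymm_inv_sq :
    esymm (fun n : ℕ+ ↦ (((n : ℕ) : ℝ) ^ 2)⁻¹) =
      fun r ↦ π ^ (2 * r) / ((2 * r + 1).factorial : ℝ) := by
  set a := fun n : ℕ+ ↦ (((n : ℕ) : ℝ) ^ 2)⁻¹
  have ha : Summable a := summable_pnat_iff_summable_nat.2 (summable_nat_pow_inv.2 one_lt_two)
  have hagree : ∀ t < 0, ∑' r, esymm a r * t ^ r
      = ∑' r, π ^ (2 * r) / ((2 * r + 1).factorial : ℝ) * t ^ r := by
    intro t ht
    obtain ⟨x, hx, rfl⟩ : ∃ x : ℝ, x ≠ 0 ∧ -x ^ 2 = t :=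
      ⟨√(-t), (sqrt_pos.2 (neg_pos.2 ht)).ne', by rw [sq_sqrt (neg_pos.2 ht).le, neg_neg]⟩
    calc ∑' r, esymm a r * (-x ^ 2) ^ r = ∏' n, (1 + -x ^ 2 * a n) :=
          (hasSum_esymm_mul_pow ha _).tsum_eq
      _ = sin (π * x) / (π * x) := by
          rw [← (hasProd_one_sub_sq_div_sq hx).tprod_eq]
          exact tprod_congr fun n ↦ by ring
      _ = _ := by
          rw [← (hasSum_sin_div (mul_ne_zero pi_ne_zero hx)).tsum_eq]
          exact tsum_congr fun r ↦ by ring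
  refine eq_of_frequently_tsum_mul_pow_eq one_pos ?_ ?_ <|
    (eventually_nhdsWithin_of_forall (s := Set.Iio (0 : ℝ)) hagree).frequently.filter_mono
      (nhdsLT_le_nhdsNE 0)
  · have hnonneg (r : ℕ) : 0 ≤ esymm a r :=
      tsum_nonneg fun s ↦ prod_nonneg fun n _ ↦ by positivity
    simpa [abs_of_nonneg (hnonneg _)] using (hasSum_esymm_mul_pow ha 1).summable
  · refine (summable_pow_div_factorial (π ^ 2)).of_nonneg_of_le (fun r ↦ by positivity)
      fun r ↦ ?_
    rw [NNReal.coe_one, one_pow, mul_one, norm_of_nonneg (by positivity), pow_mul]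
    gcongr
    omega

end MultipleZetaTwo

theorem multZeta_at_two_general (r : ℕ) :
    (∑' f : {f : Fin r → ℕ+ // StrictAnti f}, ∏ i, (((f.1 i : ℕ) : ℝ) ^ 2)⁻¹)
      = Real.pi ^ (2 * r) / ((2 * r + 1).factorial : ℝ) :=
  (MultipleZetaTwo.tsum_prod_strictAnti_eq_esymm _ r).trans
    (congrFun MultipleZetaTwo.esymm_inv_sq r)

/-- For every `r ≥ 1`:
`ζ_r(2) = ∑_{n₁ > ⋯ > n_r > 0} (n₁⋯n_r)^{-2} = π^{2r}/(2r+1)!`. -/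
theorem multZeta_at_two (r : ℕ) (hr : 1 ≤ r) :
    (∑' f : {f : Fin r → ℕ+ // StrictAnti f}, ∏ i, (((f.1 i : ℕ) : ℝ) ^ 2)⁻¹)
      = Real.pi ^ (2 * r) / ((2 * r + 1).factorial : ℝ) :=
  multZeta_at_two_general r
end
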